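/- arXiv:2407.21283 — 4 statements merged into one kernel-verified Lean document; each statement's English description precedes it below -/
import Mathlib

section
/- For nonnegative integers $k \le m$ and any real number $z$, the combinatorial identity $\sum_{j=k}^m (-1)^j \binom{z}{j-k} = \sum_{j=k}^m (-1)^j \binom{m+1-z}{m-j} \binom{j}{k}$ holds. -/
/-- Generalized binomial coefficient for a real number `z` and natural `j`. -/
noncomputable def rchoose (z : ℝ) (j : ℕ) : ℝ :=
  (∏ i ∈ Finset.range j, (z - i)) / (j.factorial : ℝ)

lemma rchoose_zero (z : ℝ) : rchoose z 0 = 1 := by simp [rchoose]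

/-- Pascal's rule for generalized binomial coefficients. -/
lemma rchoose_pascal (x : ℝ) (n : ℕ) :
    rchoose x (n + 1) = rchoose (x - 1) (n + 1) + rchoose (x - 1) n := by
  unfold rchoose
  have h1 : ∏ i ∈ Finset.range (n + 1), (x - i)
      = (∏ i ∈ Finset.range n, ((x - 1) - i)) * x := by
    rw [Finset.prod_range_succ']
    congr 1
    · exact Finset.prod_congr rfl fun i _ => by push_cast; ring
    · simp
  have h2 : ∏ i ∈ Finset.range (n + 1), ((x - 1) - i)
      = (∏ i ∈ Finset.range n, ((x - 1) - i)) * (x - 1 - n) :=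
    Finset.prod_range_succ _ _
  rw [h1, h2, Nat.factorial_succ]
  have hn : (n.factorial : ℝ) ≠ 0 := Nat.cast_ne_zero.2 n.factorial_ne_zero
  have hn1 : ((n : ℝ) + 1) ≠ 0 := by positivity
  push_cast
  field_simp
  ring

/-- Alternating sum of generalized binomial coefficients. -/
lemma alt_sum_rchoose (z : ℝ) (n : ℕ) :
    ∑ i ∈ Finset.range (n + 1), (-1 : ℝ) ^ i * rchoose z i
      = (-1) ^ n * rchoose (z - 1) n := by
  induction n with
  | zero => simp [rchoose]
  | succ n ih =>
    rw [Finset.sum_range_succ, ih, rchoose_pascal z n]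
    ring

/-- Reflection formula. -/
lemma rchoose_reflect (w : ℝ) (n : ℕ) :
    rchoose ((n : ℝ) - w) n = (-1 : ℝ) ^ n * rchoose (w - 1) n := by
  unfold rchoose
  have h : ∏ i ∈ Finset.range n, ((n : ℝ) - w - i)
      = (-1 : ℝ) ^ n * ∏ i ∈ Finset.range n, (w - 1 - i) := by
    rw [← Finset.prod_range_reflect (fun i => (n : ℝ) - w - i) n]
    have : ∀ i ∈ Finset.range n,
        ((n : ℝ) - w - (n - 1 - i : ℕ)) = (-1) * (w - 1 - i) := by
      intro i hi
      rw [Finset.mem_range] at hi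
      have : ((n - 1 - i : ℕ) : ℝ) = (n : ℝ) - 1 - i := by
        have h1 : (1 : ℕ) + i ≤ n := by omega
        have : ((n - 1 - i : ℕ) : ℝ) = ((n - (1 + i) : ℕ) : ℝ) := by
          congr 1; omega
        rw [this, Nat.cast_sub h1]
        push_cast; ring
      rw [this]; ring
    rw [Finset.prod_congr rfl this, Finset.prod_mul_distrib, Finset.prod_const,
      Finset.card_range]
  rw [h, mul_div_assoc]

/-- The key Vandermonde-type identity. -/
lemma key_identity (n : ℕ) : ∀ (k : ℕ) (w : ℝ),
    ∑ i ∈ Finset.range (n + 1),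
        (-1 : ℝ) ^ i * rchoose w i * ((k + n - i).choose k : ℝ)
      = rchoose ((k : ℝ) + n - w) n := by
  induction n with
  | zero =>
    intro k w
    simp [rchoose]
  | succ n ihn =>
    intro k
    induction k with
    | zero =>
      intro w
      simp only [Nat.zero_add, Nat.choose_zero_right, Nat.cast_one, mul_one,
        Nat.cast_zero, zero_add]
      rw [alt_sum_rchoose, ← rchoose_reflect]
    | succ k ihk =>
      intro w
      have hsplit : ∀ i ∈ Finset.range (n + 2),
          (((k + 1 + (n + 1) - i).choose (k + 1) : ℝ))
            = ((k + n + 1 - i).choose k : ℝ) + ((k + n + 1 - i).choose (k + 1) : ℝ) := by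
        intro i hi
        rw [Finset.mem_range] at hi
        have h1 : k + 1 + (n + 1) - i = (k + n + 1 - i) + 1 := by omega
        rw [h1, Nat.choose_succ_succ']
        push_cast
        ring
      have hLHS : ∑ i ∈ Finset.range (n + 2),
            (-1 : ℝ) ^ i * rchoose w i * ((k + 1 + (n + 1) - i).choose (k + 1) : ℝ)
          = (∑ i ∈ Finset.range (n + 2),
              (-1 : ℝ) ^ i * rchoose w i * ((k + (n + 1) - i).choose k : ℝ))
            + (∑ i ∈ Finset.range (n + 1),
              (-1 : ℝ) ^ i * rchoose w i * ((k + 1 + n - i).choose (k + 1) : ℝ)) := by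
        have hB : ∑ i ∈ Finset.range (n + 2),
              (-1 : ℝ) ^ i * rchoose w i * ((k + 1 + n - i).choose (k + 1) : ℝ)
            = ∑ i ∈ Finset.range (n + 1),
              (-1 : ℝ) ^ i * rchoose w i * ((k + 1 + n - i).choose (k + 1) : ℝ) := by
          rw [Finset.sum_range_succ]
          have hz : (k + 1 + n - (n + 1)).choose (k + 1) = 0 := by
            have : k + 1 + n - (n + 1) = k := by omega
            rw [this]
            exact Nat.choose_succ_self k
          rw [hz]
          push_cast
          rw [mul_zero, add_zero]
        rw [← hB, ← Finset.sum_add_distrib]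
        refine Finset.sum_congr rfl fun i hi => ?_
        rw [hsplit i hi]
        have h2 : k + (n + 1) - i = k + n + 1 - i := by omega
        have h3 : k + 1 + n - i = k + n + 1 - i := by omega
        rw [h2, h3]
        ring
      rw [hLHS, ihk w, ihn (k + 1) w]
      have e1 : (k : ℝ) + ((n : ℕ) + 1 : ℕ) - w
          = ((k : ℝ) + 1 + ((n : ℝ) + 1) - w) - 1 := by push_cast; ring
      have e2 : (((k : ℕ) + 1 : ℕ) : ℝ) + (n : ℝ) - w
          = ((k : ℝ) + 1 + ((n : ℝ) + 1) - w) - 1 := by push_cast; ring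
      have e3 : (((k : ℕ) + 1 : ℕ) : ℝ) + ((n : ℕ) + 1 : ℕ) - w
          = (k : ℝ) + 1 + ((n : ℝ) + 1) - w := by push_cast; ring
      rw [e1, e2, e3, ← rchoose_pascal]

theorem combinatorial_identity (k m : ℕ) (hkm : k ≤ m) (z : ℝ) :
    ∑ j ∈ Finset.Icc k m, (-1 : ℝ) ^ j * rchoose z (j - k)
      = ∑ j ∈ Finset.Icc k m,
          (-1 : ℝ) ^ j * rchoose ((m : ℝ) + 1 - z) (m - j) * (j.choose k : ℝ) := by
  obtain ⟨n, rfl⟩ : ∃ n, m = k + n := ⟨m - k, by omega⟩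
  have hrange : k + n + 1 - k = n + 1 := by omega
  -- LHS
  have hL : ∑ j ∈ Finset.Icc k (k + n), (-1 : ℝ) ^ j * rchoose z (j - k)
      = (-1 : ℝ) ^ (k + n) * rchoose (z - 1) n := by
    rw [← Finset.Ico_add_one_right_eq_Icc, Finset.sum_Ico_eq_sum_range, hrange]
    have : ∀ t ∈ Finset.range (n + 1),
        (-1 : ℝ) ^ (k + t) * rchoose z (k + t - k)
          = (-1 : ℝ) ^ k * ((-1 : ℝ) ^ t * rchoose z t) := by
      intro t _
      rw [pow_add, Nat.add_sub_cancel_left]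
      ring
    rw [Finset.sum_congr rfl this, ← Finset.mul_sum, alt_sum_rchoose, pow_add]
    ring
  -- RHS
  have hR : ∑ j ∈ Finset.Icc k (k + n),
        (-1 : ℝ) ^ j * rchoose (((k + n : ℕ) : ℝ) + 1 - z) (k + n - j) * (j.choose k : ℝ)
      = (-1 : ℝ) ^ (k + n) * rchoose (z - 1) n := by
    rw [← Finset.Ico_add_one_right_eq_Icc, Finset.sum_Ico_eq_sum_range, hrange]
    set w : ℝ := ((k + n : ℕ) : ℝ) + 1 - z with hw
    rw [← Finset.sum_range_reflect]
    have hterm : ∀ i ∈ Finset.range (n + 1),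
        (-1 : ℝ) ^ (k + (n + 1 - 1 - i)) * rchoose w (k + n - (k + (n + 1 - 1 - i)))
            * (((k + (n + 1 - 1 - i)).choose k : ℝ))
          = (-1 : ℝ) ^ (k + n)
            * ((-1 : ℝ) ^ i * rchoose w i * ((k + n - i).choose k : ℝ)) := by
      intro i hi
      rw [Finset.mem_range] at hi
      have h1 : k + (n + 1 - 1 - i) = k + n - i := by omega
      rw [h1]
      have h2 : k + n - (k + n - i) = i := by omega
      rw [h2]
      have h3 : (-1 : ℝ) ^ (k + n - i) = (-1 : ℝ) ^ (k + n) * (-1 : ℝ) ^ i := by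
        have h4 : (k + n - i) + i = k + n := by omega
        have h5 : (-1 : ℝ) ^ ((k + n - i) + i) = (-1 : ℝ) ^ (k + n) := by rw [h4]
        rw [pow_add] at h5
        have h6 : ((-1 : ℝ) ^ i) * ((-1 : ℝ) ^ i) = 1 := by
          rw [← pow_add]
          exact Even.neg_one_pow ⟨i, by ring⟩
        calc (-1 : ℝ) ^ (k + n - i)
            = (-1 : ℝ) ^ (k + n - i) * (((-1 : ℝ) ^ i) * ((-1 : ℝ) ^ i)) := by
              rw [h6, mul_one]
          _ = ((-1 : ℝ) ^ (k + n - i) * (-1 : ℝ) ^ i) * (-1 : ℝ) ^ i := by ring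
          _ = (-1 : ℝ) ^ (k + n) * (-1 : ℝ) ^ i := by rw [h5]
      rw [h3]
      ring
    rw [Finset.sum_congr rfl hterm, ← Finset.mul_sum, key_identity n k w]
    congr 1
    have : (k : ℝ) + n - w = z - 1 := by
      rw [hw]; push_cast; ring
    rw [this]
  rw [hL, hR]
end

section
/- Generalized Hankel formula special case: for a nonnegative integer $j$, real $r \ge 0$ and $p > 0$, $\int_0^\infty t^{2j+1} J_0(rt) e^{-p^2 t^2}\, dt = \frac{j!}{2 p^{2j+2}} e^{-r^2/(4p^2)} L_j^{(0)}\!\left(\frac{r^2}{4p^2}\right)$, where $J_0$ is the Bessel function of the first kind of order $0$ and $L_j^{(0)}$ is the Laguerre polynomial of degree $j$. -/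
open Real MeasureTheory

/-- The Bessel function of the first kind of order zero. -/
noncomputable def besselJ0 (z : ℝ) : ℝ :=
  ∑' k : ℕ, (-1 : ℝ) ^ k / ((k.factorial : ℝ) ^ 2) * (z / 2) ^ (2 * k)

/-- The Laguerre polynomial `L_j^{(0)}` of degree `j`. -/
noncomputable def laguerre (j : ℕ) (z : ℝ) : ℝ :=
  ∑ k ∈ Finset.range (j + 1), (-1 : ℝ) ^ k / (k.factorial : ℝ) * (j.choose k : ℝ) * z ^ k

lemma vandermonde' (j n : ℕ) :
    ∑ i ∈ Finset.range (n + 1), j.choose i * n.choose i = (j + n).choose n := by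
  rw [Nat.add_choose_eq, Finset.Nat.sum_antidiagonal_eq_sum_range_succ_mk]
  refine Finset.sum_congr rfl fun i hi => ?_
  rw [Nat.choose_symm (Nat.lt_succ_iff.mp (Finset.mem_range.mp hi))]

lemma coeff_eq (j n : ℕ) :
    ∑ i ∈ Finset.range (n + 1),
        (j.choose i : ℝ) / ((i.factorial : ℝ) * ((n - i).factorial : ℝ))
      = ((j + n).choose n : ℝ) / (n.factorial : ℝ) := by
  have h : ∀ i ∈ Finset.range (n + 1),
      (j.choose i : ℝ) / ((i.factorial : ℝ) * ((n - i).factorial : ℝ))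
        = (j.choose i : ℝ) * (n.choose i : ℝ) / (n.factorial : ℝ) := by
    intro i hi
    have hin : i ≤ n := Nat.lt_succ_iff.mp (Finset.mem_range.mp hi)
    have h2 : ((n.choose i : ℝ)) * ((i.factorial : ℝ) * ((n - i).factorial : ℝ))
        = (n.factorial : ℝ) := by
      rw [← mul_assoc]; exact_mod_cast congrArg (Nat.cast (R := ℝ))
        (Nat.choose_mul_factorial_mul_factorial hin)
    rw [div_eq_div_iff (by positivity) (by positivity)]
    nlinarith [h2]
  rw [Finset.sum_congr rfl h, ← Finset.sum_div]
  have := congrArg (Nat.cast (R := ℝ)) (vandermonde' j n)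
  push_cast at this
  rw [this]

lemma exp_mul_laguerre (j : ℕ) (x : ℝ) :
    Real.exp (-x) * laguerre j x
      = ∑' n : ℕ, (-1 : ℝ) ^ n * (((j + n).choose n : ℝ) / n.factorial) * x ^ n := by
  set b : ℕ → ℝ := fun i => (-1 : ℝ) ^ i / (i.factorial : ℝ) * (j.choose i : ℝ) * x ^ i with hb
  set a : ℕ → ℝ := fun m => (-x) ^ m / (m.factorial : ℝ) with ha
  have hbz : ∀ i ∉ Finset.range (j + 1), b i = 0 := by
    intro i hi
    have hji : j < i := by simpa using Nat.not_lt.mp (Finset.mem_range.not.mp hi)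
    simp [hb, Nat.choose_eq_zero_of_lt hji]
  have hbs : Summable fun i => ‖b i‖ :=
    summable_of_ne_finset_zero (s := Finset.range (j + 1)) fun i hi => by rw [hbz i hi, norm_zero]
  have has : Summable fun m => ‖a m‖ := by
    have := Real.summable_pow_div_factorial |x|
    refine this.congr fun m => ?_
    simp [ha, abs_div, abs_pow]
  have hexp : Real.exp (-x) = ∑' m, a m := by
    rw [Real.exp_eq_exp_ℝ, NormedSpace.exp_eq_tsum_div]
  have hlag : laguerre j x = ∑' i, b i := (tsum_eq_sum hbz).symm
  rw [hexp, hlag, mul_comm, tsum_mul_tsum_eq_tsum_sum_range_of_summable_norm hbs has]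
  congr 1
  funext n
  have key : ∀ i ∈ Finset.range (n + 1), b i * a (n - i)
      = (-1 : ℝ) ^ n * x ^ n *
          ((j.choose i : ℝ) / ((i.factorial : ℝ) * ((n - i).factorial : ℝ))) := by
    intro i hi
    have hin : i ≤ n := Nat.lt_succ_iff.mp (Finset.mem_range.mp hi)
    simp only [hb, ha, neg_pow x (n - i)]
    have hx : x ^ i * x ^ (n - i) = x ^ n := by
      rw [← pow_add, Nat.add_sub_cancel' hin]
    have hs : (-1 : ℝ) ^ i * (-1 : ℝ) ^ (n - i) = (-1 : ℝ) ^ n := by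
      rw [← pow_add, Nat.add_sub_cancel' hin]
    calc (-1 : ℝ) ^ i / (i.factorial : ℝ) * (j.choose i : ℝ) * x ^ i *
          ((-1 : ℝ) ^ (n - i) * x ^ (n - i) / ((n - i).factorial : ℝ))
        = ((-1 : ℝ) ^ i * (-1 : ℝ) ^ (n - i)) * (x ^ i * x ^ (n - i)) *
            ((j.choose i : ℝ) / ((i.factorial : ℝ) * ((n - i).factorial : ℝ))) := by ring
      _ = _ := by rw [hx, hs]
  rw [Finset.sum_congr rfl key, ← Finset.mul_sum, coeff_eq j n]
  ring

lemma integrable_moment (n : ℕ) {b : ℝ} (hb : 0 < b) :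
    IntegrableOn (fun t : ℝ => t ^ n * Real.exp (-b * t ^ 2)) (Set.Ioi 0) := by
  refine (integrableOn_rpow_mul_exp_neg_mul_sq hb (s := (n : ℝ))
    (by have h0 : (0 : ℝ) ≤ n := n.cast_nonneg; linarith)).congr_fun ?_ measurableSet_Ioi
  intro x hx
  dsimp only
  rw [Real.rpow_natCast]

lemma moment (m : ℕ) {b : ℝ} (hb : 0 < b) :
    ∫ t in Set.Ioi (0 : ℝ), t ^ (2 * m + 1) * Real.exp (-b * t ^ 2)
      = (m.factorial : ℝ) / (2 * b ^ (m + 1)) := by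
  have h := integral_rpow_mul_exp_neg_mul_rpow (p := 2) (q := (2 * m + 1 : ℝ))
    two_pos (by have h0 : (0 : ℝ) ≤ m := m.cast_nonneg; linarith) hb
  have hL : ∫ t in Set.Ioi (0 : ℝ), t ^ (2 * m + 1) * Real.exp (-b * t ^ 2)
      = ∫ x in Set.Ioi (0 : ℝ), x ^ (2 * m + 1 : ℝ) * Real.exp (-b * x ^ (2 : ℝ)) := by
    refine setIntegral_congr_fun measurableSet_Ioi fun x hx => ?_
    rw [Real.rpow_two, ← Real.rpow_natCast x (2 * m + 1)]
    norm_num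
  rw [hL, h]
  have h1 : ((2 * m + 1 : ℝ) + 1) / 2 = (m : ℝ) + 1 := by ring
  have h3 : -((2 * m + 1 : ℝ) + 1) / 2 = -((m : ℝ) + 1) := by ring
  rw [h1, h3, Real.Gamma_nat_eq_factorial]
  have h4 : (-((m : ℝ) + 1)) = -(((m + 1 : ℕ) : ℝ)) := by push_cast; ring
  rw [h4, Real.rpow_neg hb.le, Real.rpow_natCast]
  rw [one_div, eq_div_iff (by positivity : (2:ℝ) * b ^ (m+1) ≠ 0)]
  field_simp

lemma choose_le_two_pow' (n k : ℕ) : n.choose k ≤ 2 ^ n := by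
  rcases le_or_gt k n with h | h
  · calc n.choose k ≤ ∑ i ∈ Finset.range (n + 1), n.choose i :=
        Finset.single_le_sum (fun i _ => Nat.zero_le _)
          (Finset.mem_range.mpr (Nat.lt_succ_of_le h))
    _ = 2 ^ n := Nat.sum_range_choose n
  · rw [Nat.choose_eq_zero_of_lt h]; exact Nat.zero_le _

lemma summable_aux (j : ℕ) (x : ℝ) (hx : 0 ≤ x) :
    Summable fun k : ℕ => (((j + k).choose k : ℝ) / k.factorial) * x ^ k := by
  refine Summable.of_nonneg_of_le (fun k => by positivity) (fun k => ?_)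
    ((Real.summable_pow_div_factorial (2 * x)).mul_left ((2 : ℝ) ^ j))
  have hC : (((j + k).choose k : ℝ)) ≤ (2 : ℝ) ^ (j + k) := by
    exact_mod_cast choose_le_two_pow' (j + k) k
  calc (((j + k).choose k : ℝ) / k.factorial) * x ^ k
      ≤ ((2 : ℝ) ^ (j + k) / k.factorial) * x ^ k := by gcongr
    _ = (2 : ℝ) ^ j * ((2 * x) ^ k / k.factorial) := by
        rw [pow_add, mul_pow]; ring

theorem hankel_formula_special_case (j : ℕ) (r p : ℝ) (hr : 0 ≤ r) (hp : 0 < p) :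
    (∫ t in Set.Ioi (0 : ℝ), t ^ (2 * j + 1) * besselJ0 (r * t) * Real.exp (-p ^ 2 * t ^ 2))
      = (j.factorial : ℝ) / (2 * p ^ (2 * j + 2)) * Real.exp (-r ^ 2 / (4 * p ^ 2))
          * laguerre j (r ^ 2 / (4 * p ^ 2)) := by
  have hb : (0 : ℝ) < p ^ 2 := by positivity
  set x : ℝ := r ^ 2 / (4 * p ^ 2) with hxdef
  have hx0 : 0 ≤ x := by positivity
  set c : ℕ → ℝ := fun k => (-1 : ℝ) ^ k / ((k.factorial : ℝ) ^ 2) * (r / 2) ^ (2 * k) with hc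
  set F : ℕ → ℝ → ℝ :=
    fun k t => c k * (t ^ (2 * (j + k) + 1) * Real.exp (-p ^ 2 * t ^ 2)) with hF
  have hInt : ∀ k, Integrable (F k) (volume.restrict (Set.Ioi 0)) := fun k =>
    (integrable_moment (2 * (j + k) + 1) hb).const_mul (c k)
  -- core algebraic identity
  have hfac : ∀ k : ℕ, (((j + k).factorial : ℝ))
      = ((j + k).choose k : ℝ) * (k.factorial : ℝ) * (j.factorial : ℝ) := by
    intro k
    have := Nat.choose_mul_factorial_mul_factorial (Nat.le_add_left k j)
    rw [Nat.add_sub_cancel] at this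
    exact_mod_cast (congrArg (Nat.cast (R := ℝ)) this).symm
  have halg : ∀ (s : ℝ) (k : ℕ),
      s / ((k.factorial : ℝ) ^ 2) * (r / 2) ^ (2 * k)
          * (((j + k).factorial : ℝ) / (2 * (p ^ 2) ^ (j + k + 1)))
        = (j.factorial : ℝ) / (2 * p ^ (2 * j + 2))
            * (s * (((j + k).choose k : ℝ) / k.factorial) * x ^ k) := by
    intro s k
    rw [hfac k]
    have hp1 : (r / 2) ^ (2 * k) = (r ^ 2 / 4) ^ k := by
      rw [pow_mul, div_pow]; norm_num
    have hp2 : (p ^ 2) ^ (j + k + 1) = (p ^ 2) ^ (j + 1) * (p ^ 2) ^ k := by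
      rw [show j + k + 1 = (j + 1) + k from by omega, pow_add]
    have hp3 : p ^ (2 * j + 2) = (p ^ 2) ^ (j + 1) := by
      rw [show 2 * j + 2 = 2 * (j + 1) from by omega, pow_mul]
    have hp4 : x ^ k = (r ^ 2 / 4) ^ k / (p ^ 2) ^ k := by
      rw [hxdef, show r ^ 2 / (4 * p ^ 2) = (r ^ 2 / 4) / (p ^ 2) from by ring, div_pow]
    rw [hp1, hp2, hp3, hp4]
    have hk : ((k.factorial : ℝ)) ≠ 0 := by positivity
    have hq : ((p : ℝ) ^ 2) ^ (j + 1) ≠ 0 := by positivity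
    have hq2 : ((p : ℝ) ^ 2) ^ k ≠ 0 := by positivity
    field_simp
  -- pointwise expansion of the integrand
  have hpt : ∀ t : ℝ, t ^ (2 * j + 1) * besselJ0 (r * t) * Real.exp (-p ^ 2 * t ^ 2)
      = ∑' k, F k t := by
    intro t
    rw [besselJ0]
    rw [mul_comm (t ^ (2 * j + 1)), mul_assoc, ← tsum_mul_right]
    refine tsum_congr fun k => ?_
    have h1 : (r * t / 2) ^ (2 * k) = (r / 2) ^ (2 * k) * t ^ (2 * k) := by
      rw [show r * t / 2 = (r / 2) * t by ring, mul_pow]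
    have h2 : t ^ (2 * (j + k) + 1) = t ^ (2 * j + 1) * t ^ (2 * k) := by
      rw [← pow_add]; congr 1; ring
    rw [hF]; dsimp only
    rw [h1, h2, hc]
    ring
  have hFnorm : ∀ k, (∫ t in Set.Ioi (0 : ℝ), ‖F k t‖)
      = |c k| * (((j + k).factorial : ℝ) / (2 * (p ^ 2) ^ (j + k + 1))) := by
    intro k
    rw [← moment (j + k) hb, ← MeasureTheory.integral_const_mul]
    refine setIntegral_congr_fun measurableSet_Ioi fun t ht => ?_
    have ht0 : (0 : ℝ) ≤ t := le_of_lt ht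
    rw [hF]; dsimp only
    rw [norm_mul, Real.norm_eq_abs, Real.norm_eq_abs, abs_of_nonneg
      (show (0 : ℝ) ≤ t ^ (2 * (j + k) + 1) * Real.exp (-p ^ 2 * t ^ 2) by positivity)]
  have hsum : Summable fun k => ∫ t in Set.Ioi (0 : ℝ), ‖F k t‖ := by
    refine (((summable_aux j x hx0).mul_left
      ((j.factorial : ℝ) / (2 * p ^ (2 * j + 2)))).congr fun k => ?_)
    rw [hFnorm k, hc]
    have habs : |(-1 : ℝ) ^ k / ((k.factorial : ℝ) ^ 2) * (r / 2) ^ (2 * k)|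
        = 1 / ((k.factorial : ℝ) ^ 2) * (r / 2) ^ (2 * k) := by
      rw [abs_mul, abs_div, abs_pow, abs_neg, abs_one, one_pow, abs_of_nonneg (by positivity),
        abs_of_nonneg (by positivity : (0:ℝ) ≤ (r / 2) ^ (2 * k))]
    dsimp only
    rw [habs, halg 1 k]
    ring
  -- interchange
  calc (∫ t in Set.Ioi (0 : ℝ), t ^ (2 * j + 1) * besselJ0 (r * t) * Real.exp (-p ^ 2 * t ^ 2))
      = ∫ t in Set.Ioi (0 : ℝ), ∑' k, F k t := by
        exact setIntegral_congr_fun measurableSet_Ioi fun t _ => hpt t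
    _ = ∑' k, ∫ t in Set.Ioi (0 : ℝ), F k t :=
        (MeasureTheory.integral_tsum_of_summable_integral_norm hInt hsum).symm
    _ = ∑' k, (j.factorial : ℝ) / (2 * p ^ (2 * j + 2))
          * ((-1 : ℝ) ^ k * (((j + k).choose k : ℝ) / k.factorial) * x ^ k) := by
        refine tsum_congr fun k => ?_
        rw [hF]; dsimp only
        rw [MeasureTheory.integral_const_mul, moment (j + k) hb]
        simp only [hc]
        exact halg ((-1 : ℝ) ^ k) k
    _ = (j.factorial : ℝ) / (2 * p ^ (2 * j + 2)) * (Real.exp (-x) * laguerre j x) := by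
        rw [tsum_mul_left, exp_mul_laguerre j x]
    _ = _ := by
        rw [hxdef, ← mul_assoc]
        congr 2
        rw [neg_div]
end

section
/- For the base case $j = 0$: $\int_0^\infty t \, J_0(rt) \, e^{-p^2 t^2} \, dt = \frac{1}{2p^2} e^{-r^2/(4p^2)}$ for all $r \ge 0$ and $p > 0$. -/
open Real MeasureTheory

lemma key_integral (p : ℝ) (hp : 0 < p) (k : ℕ) :
    ∫ t in Set.Ioi (0:ℝ), t ^ (2*k+1) * Real.exp (-p^2 * t^2)
      = (k.factorial : ℝ) / (2 * (p^2)^(k+1)) := by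
  have hb : (0:ℝ) < p^2 := by positivity
  have h := integral_rpow_mul_exp_neg_mul_rpow (p := 2) (q := ((2*k+1 : ℕ) : ℝ)) (b := p^2)
    two_pos (lt_of_lt_of_le neg_one_lt_zero (Nat.cast_nonneg _)) hb
  rw [show (∫ t in Set.Ioi (0:ℝ), t ^ (2*k+1) * Real.exp (-p^2 * t^2))
      = ∫ x in Set.Ioi (0:ℝ), x ^ (((2*k+1:ℕ)):ℝ) * Real.exp (-p^2 * x ^ (2:ℝ)) by
    refine setIntegral_congr_fun measurableSet_Ioi (fun x hx => ?_)
    rw [Real.rpow_natCast, Real.rpow_two], h]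
  have h1 : (-(((2*k+1:ℕ):ℝ) + 1) / 2) = -((k:ℝ)+1) := by push_cast; ring
  have h2 : ((((2*k+1:ℕ):ℝ)) + 1) / 2 = (k:ℝ) + 1 := by push_cast; ring
  rw [h1, h2, Real.Gamma_nat_eq_factorial, Real.rpow_neg hb.le]
  rw [show ((k:ℝ)+1) = ((k+1 : ℕ):ℝ) by push_cast; ring, Real.rpow_natCast]
  rw [eq_div_iff (by positivity)]
  field_simp

lemma key_integrable (p : ℝ) (hp : 0 < p) (k : ℕ) :
    IntegrableOn (fun t : ℝ => t ^ (2*k+1) * Real.exp (-p^2 * t^2)) (Set.Ioi 0) := by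
  have hb : (0:ℝ) < p^2 := by positivity
  have := integrableOn_rpow_mul_exp_neg_mul_sq hb
    (s := ((2*k+1:ℕ):ℝ)) (lt_of_lt_of_le neg_one_lt_zero (Nat.cast_nonneg _))
  refine this.congr_fun (fun x _ => ?_) measurableSet_Ioi
  dsimp only
  rw [Real.rpow_natCast]

theorem hankel_formula_base_case (r p : ℝ) (hr : 0 ≤ r) (hp : 0 < p) :
    (∫ t in Set.Ioi (0 : ℝ), t * besselJ0 (r * t) * Real.exp (-p ^ 2 * t ^ 2))
      = 1 / (2 * p ^ 2) * Real.exp (-r ^ 2 / (4 * p ^ 2)) := by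
  have hp2 : (0:ℝ) < p^2 := by positivity
  set C : ℕ → ℝ := fun k => (-1:ℝ)^k / ((k.factorial : ℝ)^2) * (r/2)^(2*k) with hC
  set F : ℕ → ℝ → ℝ := fun k t => C k * (t ^ (2*k+1) * Real.exp (-p^2 * t^2)) with hF
  -- pointwise: integrand = tsum of F
  have hpt : ∀ t : ℝ, t * besselJ0 (r * t) * Real.exp (-p^2 * t^2) = ∑' k, F k t := by
    intro t
    rw [besselJ0, ← tsum_mul_left, ← tsum_mul_right]
    congr 1
    funext k
    simp only [hF, hC]
    ring_nf
  -- integrability of each F k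
  have hint : ∀ k, IntegrableOn (F k) (Set.Ioi 0) := fun k =>
    (key_integrable p hp k).const_mul _
  -- value of each integral
  have hval : ∀ k, (∫ t in Set.Ioi (0:ℝ), F k t)
      = 1 / (2 * p^2) * ((-r^2/(4*p^2))^k / (k.factorial : ℝ)) := by
    intro k
    simp only [hF]
    rw [MeasureTheory.integral_const_mul, key_integral p hp k]
    have hfk : ((k.factorial : ℝ)) ≠ 0 := Nat.cast_ne_zero.mpr k.factorial_ne_zero
    simp only [hC]
    have e : (-r^2/(4*p^2)) = (-1) * ((r/2)^2/(p^2)) := by ring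
    rw [e, mul_pow, div_pow, ← pow_mul]
    have hfk2 : ((k.factorial : ℝ))^2 ≠ 0 := pow_ne_zero _ hfk
    field_simp
    simp only [pow_mul, mul_pow]
    have h4 : ((1:ℝ)/4)^k * 4^k = 1 := by rw [← mul_pow]; norm_num
    have hpp : p^(k*2) * p⁻¹^(k*2) = 1 := by rw [← mul_pow, mul_inv_cancel₀ hp.ne', one_pow]
    linear_combination (-(r^(k*2)*p^2*(p^(k*2)*p⁻¹^(k*2)))) * h4 - r^(k*2)*p^2 * hpp
  -- norm integrals and summability
  have hnorm : ∀ k, (∫ t in Set.Ioi (0:ℝ), ‖F k t‖)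
      = 1 / (2 * p^2) * ((r^2/(4*p^2))^k / (k.factorial : ℝ)) := by
    intro k
    have : ∀ t ∈ Set.Ioi (0:ℝ), ‖F k t‖
        = ((r/2)^(2*k) / ((k.factorial : ℝ)^2)) * (t ^ (2*k+1) * Real.exp (-p^2 * t^2)) := by
      intro t ht
      have ht' : (0:ℝ) < t := ht
      simp only [hF, hC, Real.norm_eq_abs, abs_mul, abs_div, abs_pow, abs_neg, abs_one,
        one_pow, Nat.abs_cast, abs_of_pos ht', Real.abs_exp, abs_of_nonneg hr, abs_two]
      ring
    rw [setIntegral_congr_fun measurableSet_Ioi this, MeasureTheory.integral_const_mul,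
      key_integral p hp k]
    have hfk : ((k.factorial : ℝ)) ≠ 0 := Nat.cast_ne_zero.mpr k.factorial_ne_zero
    have e : (r^2/(4*p^2)) = ((r/2)^2/(p^2)) := by ring
    rw [e, div_pow, ← pow_mul]
    field_simp
    simp only [pow_mul, mul_pow]
    have h4 : ((1:ℝ)/4)^k * 4^k = 1 := by rw [← mul_pow]; norm_num
    have hpp : p^(k*2) * p⁻¹^(k*2) = 1 := by rw [← mul_pow, mul_inv_cancel₀ hp.ne', one_pow]
    linear_combination (-(r^(k*2)*p^2*(p^(k*2)*p⁻¹^(k*2)))) * h4 - r^(k*2)*p^2 * hpp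
  have hsum : Summable fun k => ∫ t in Set.Ioi (0:ℝ), ‖F k t‖ := by
    simp only [hnorm]
    exact (Real.summable_pow_div_factorial (r^2/(4*p^2))).mul_left _
  -- interchange
  calc (∫ t in Set.Ioi (0 : ℝ), t * besselJ0 (r * t) * Real.exp (-p ^ 2 * t ^ 2))
      = ∫ t in Set.Ioi (0:ℝ), ∑' k, F k t := by
        refine setIntegral_congr_fun measurableSet_Ioi (fun t _ => hpt t)
    _ = ∑' k, ∫ t in Set.Ioi (0:ℝ), F k t :=
        (MeasureTheory.integral_tsum_of_summable_integral_norm hint hsum).symm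
    _ = 1 / (2 * p ^ 2) * Real.exp (-r ^ 2 / (4 * p ^ 2)) := by
        simp only [hval]
        rw [tsum_mul_left]
        congr 1
        rw [Real.exp_eq_exp_ℝ, NormedSpace.exp_eq_tsum_div]
end

section
/- Let $\phi_{2m+2}(s;c) = \frac{1}{\sqrt{2\pi} c} L_m^{(1/2)}\!\big(\frac{s^2}{2c^2}\big) e^{-s^2/(2c^2)}$ as a radial function on $\mathbb{R}^2$. Then its 2-dimensional Fourier transform is radial with $\mathcal{F}_2 \phi_{2m+2}(r;c) = \sqrt{2\pi}\, c \sum_{j=0}^m (-1)^j \binom{m + 1/2}{m - j} L_j^{(0)}\!\big(\frac{c^2 r^2}{2}\big) e^{-c^2 r^2/2}$, where $r = \|\omega\|$. -/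
open Real MeasureTheory

/-- The generalized Laguerre polynomial `L_m^{(α)}`. -/
noncomputable def genLaguerre (m : ℕ) (α : ℝ) (s : ℝ) : ℝ :=
  ∑ k ∈ Finset.range (m + 1),
    (-1 : ℝ) ^ k * rchoose ((m : ℝ) + α) (m - k) * s ^ k / (k.factorial : ℝ)

section Aux

open Finset Set

lemma aux_choose_le_two_pow (a b : ℕ) : a.choose b ≤ 2 ^ a := by
  rcases le_or_gt b a with h | h
  · calc a.choose b ≤ ∑ m ∈ range (a+1), a.choose m :=
        Finset.single_le_sum (fun i _ => Nat.zero_le _) (Finset.mem_range.2 (Nat.lt_succ_of_le h))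
      _ = 2 ^ a := Nat.sum_range_choose a
  · simp [Nat.choose_eq_zero_of_lt h]

lemma aux_vandermonde (k n : ℕ) :
    ∑ j ∈ range (k+1), (if j ≤ n then k.choose j * n.choose j else 0) = (k+n).choose n := by
  have h1 : (k+n).choose n = ∑ i ∈ range (n+1), k.choose i * n.choose i := by
    rw [Nat.add_choose_eq, Finset.Nat.sum_antidiagonal_eq_sum_range_succ
      (fun x y => k.choose x * n.choose y)]
    exact Finset.sum_congr rfl fun i hi => by
      rw [Nat.choose_symm (Nat.lt_succ_iff.1 (Finset.mem_range.1 hi))]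
  rw [h1]
  have key : ∀ N, k+1 ≤ N → n+1 ≤ N →
      (∑ j ∈ range (k+1), (if j ≤ n then k.choose j * n.choose j else 0)
        = ∑ j ∈ range N, (if j ≤ n then k.choose j * n.choose j else 0)
      ∧ ∑ i ∈ range (n+1), k.choose i * n.choose i
        = ∑ j ∈ range N, (if j ≤ n then k.choose j * n.choose j else 0)) := by
    intro N hk hn
    constructor
    · apply Finset.sum_subset (by intro x hx; simp only [Finset.mem_range] at hx ⊢; omega)
      intro x _ hx
      simp only [Finset.mem_range, not_lt] at hx
      have : k < x := by omega
      simp [Nat.choose_eq_zero_of_lt this]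
    · rw [Finset.sum_congr rfl (fun i hi => ?_) , ]
      · apply Finset.sum_subset (by intro x hx; simp only [Finset.mem_range] at hx ⊢; omega)
        intro x _ hx
        simp only [Finset.mem_range, not_lt] at hx
        have : ¬ (x ≤ n) := by omega
        simp [this]
      · simp only [Finset.mem_range] at hi
        rw [if_pos (by omega)]
  obtain ⟨h2, h3⟩ := key (k+n+2) (by omega) (by omega)
  rw [h2, ← h3]

lemma aux_rchoose_nat (n j : ℕ) (h : j ≤ n) : rchoose (n : ℝ) j = (n.choose j : ℝ) := by
  have hp : (∏ i ∈ Finset.range j, ((n:ℝ) - i)) = (n.descFactorial j : ℝ) := by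
    rw [Nat.descFactorial_eq_prod_range, Nat.cast_prod]
    refine Finset.prod_congr rfl fun i hi => ?_
    rw [Nat.cast_sub (le_trans (Nat.le_of_lt_succ (Nat.lt_succ_of_lt (Finset.mem_range.1 hi))) h)]
  rw [rchoose, hp, Nat.descFactorial_eq_factorial_mul_choose n j]
  push_cast
  rw [mul_div_assoc, mul_comm]
  field_simp

lemma aux_genLaguerre_zero_eq (k : ℕ) (x : ℝ) :
    genLaguerre k 0 x =
      ∑ j ∈ range (k+1), (-1:ℝ)^j * (k.choose j : ℝ) * x^j / (j.factorial : ℝ) := by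
  rw [genLaguerre]
  refine Finset.sum_congr rfl fun j hj => ?_
  have hj' : j ≤ k := Nat.lt_succ_iff.1 (Finset.mem_range.1 hj)
  rw [add_zero, aux_rchoose_nat k (k - j) (Nat.sub_le k j), Nat.choose_symm hj']

lemma aux_fact_ratio_eq (k n : ℕ) :
    ((k+n).factorial : ℝ) = ((k+n).choose k : ℝ) * k.factorial * n.factorial := by
  rw [← Nat.cast_mul, ← Nat.cast_mul,
    ← Nat.choose_mul_factorial_mul_factorial (Nat.le_add_right k n)]
  congr 3
  omega

lemma aux_summable_fact_ratio (k : ℕ) {y : ℝ} (hy : 0 ≤ y) :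
    Summable (fun n : ℕ => ((k+n).factorial : ℝ) / ((n.factorial : ℝ))^2 * y ^ n) := by
  refine Summable.of_nonneg_of_le (fun n => by positivity) (fun n => ?_)
    (((Real.summable_pow_div_factorial (2*y)).mul_left ((k.factorial : ℝ) * 2^k)))
  have h1 : ((k+n).factorial : ℝ) / ((n.factorial : ℝ))^2
      ≤ (k.factorial : ℝ) * 2^(k+n) / n.factorial := by
    rw [aux_fact_ratio_eq, pow_two]
    rw [div_le_div_iff₀ (by positivity) (by positivity)]
    have : ((k+n).choose k : ℝ) ≤ 2^(k+n) := by
      exact_mod_cast Nat.cast_le.2 (aux_choose_le_two_pow (k+n) k)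
    calc ((k+n).choose k : ℝ) * k.factorial * n.factorial * n.factorial
        ≤ 2^(k+n) * k.factorial * n.factorial * n.factorial := by gcongr
      _ = (k.factorial : ℝ) * 2^(k+n) * (n.factorial * n.factorial) := by ring
  calc ((k+n).factorial : ℝ) / ((n.factorial : ℝ))^2 * y ^ n
      ≤ (k.factorial : ℝ) * 2^(k+n) / n.factorial * y^n := by gcongr
    _ = (k.factorial : ℝ) * 2^k * ((2*y)^n / n.factorial) := by
        rw [pow_add, mul_pow]; ring

lemma aux_exp_neg_hasSum (x : ℝ) :
    HasSum (fun i : ℕ => (-x)^i / (i.factorial : ℝ)) (Real.exp (-x)) := by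
  have h := Real.summable_pow_div_factorial (-x)
  have := h.hasSum
  rwa [show ∑' i : ℕ, (-x)^i / (i.factorial : ℝ) = Real.exp (-x) from by
    rw [Real.exp_eq_exp_ℝ, NormedSpace.exp_eq_tsum_div]] at this

lemma aux_laguerre_exp_series (k : ℕ) (x : ℝ) :
    HasSum (fun n : ℕ => (-1:ℝ)^n * ((k+n).factorial : ℝ)
        / (((n.factorial : ℝ))^2 * (k.factorial : ℝ)) * x^n)
      (Real.exp (-x) * genLaguerre k 0 x) := by
  classical
  set g : ℕ → ℕ → ℝ := fun j n =>
    if j ≤ n then (-1:ℝ)^j * (k.choose j : ℝ) / (j.factorial : ℝ)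
      * ((-1:ℝ)^(n-j) * x^n / (((n-j).factorial : ℝ))) else 0 with hg
  have hgj : ∀ j, HasSum (g j)
      ((-1:ℝ)^j * (k.choose j : ℝ) * x^j / (j.factorial : ℝ) * Real.exp (-x)) := by
    intro j
    have hinj : Function.Injective (fun i : ℕ => i + j) := add_left_injective j
    have hvan : ∀ n, n ∉ Set.range (fun i : ℕ => i + j) → g j n = 0 := by
      intro n hn
      rw [hg]
      simp only []
      rw [if_neg]
      intro hle
      exact hn ⟨n - j, Nat.sub_add_cancel hle⟩
    rw [← hinj.hasSum_iff hvan]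
    have hfun : (g j ∘ fun i : ℕ => i + j) =
        fun i => ((-1:ℝ)^j * (k.choose j : ℝ) * x^j / (j.factorial : ℝ))
          * ((-x)^i / i.factorial) := by
      funext i
      simp only [Function.comp_apply, hg, if_pos (Nat.le_add_left j i), Nat.add_sub_cancel]
      rw [neg_pow x i, pow_add]
      ring
    rw [hfun]
    exact (aux_exp_neg_hasSum x).mul_left _
  have hsum := hasSum_sum (s := range (k+1)) (f := g)
    (a := fun j => (-1:ℝ)^j * (k.choose j : ℝ) * x^j / (j.factorial : ℝ) * Real.exp (-x))
    (fun j _ => hgj j)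
  have hpt : ∀ n, ∑ j ∈ range (k+1), g j n
      = (-1:ℝ)^n * ((k+n).factorial : ℝ) / (((n.factorial : ℝ))^2 * (k.factorial : ℝ)) * x^n := by
    intro n
    have hterm : ∀ j ∈ range (k+1), g j n
        = ((if j ≤ n then k.choose j * n.choose j else 0 : ℕ) : ℝ)
          * ((-1:ℝ)^n * x^n / (n.factorial : ℝ)) := by
      intro j _
      rw [hg]
      simp only []
      by_cases hjn : j ≤ n
      · rw [if_pos hjn, if_pos hjn]
        have hfac : (n.factorial : ℝ) = (n.choose j : ℝ) * j.factorial * (n-j).factorial := by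
          rw [← Nat.cast_mul, ← Nat.cast_mul, Nat.choose_mul_factorial_mul_factorial hjn]
        have hsign : (-1:ℝ)^j * (-1:ℝ)^(n-j) = (-1:ℝ)^n := by
          rw [← pow_add]; congr 1; omega
        push_cast
        rw [hfac, ← hsign]
        have h1 : (j.factorial : ℝ) ≠ 0 := Nat.cast_ne_zero.2 (Nat.factorial_ne_zero j)
        have h2 : ((n-j).factorial : ℝ) ≠ 0 := Nat.cast_ne_zero.2 (Nat.factorial_ne_zero _)
        have h3 : (n.choose j : ℝ) ≠ 0 := Nat.cast_ne_zero.2 (Nat.choose_pos hjn).ne'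
        field_simp
      · rw [if_neg hjn, if_neg hjn, Nat.cast_zero, zero_mul]
    rw [Finset.sum_congr rfl hterm, ← Finset.sum_mul, ← Nat.cast_sum, aux_vandermonde]
    have hfac2 : ((k+n).factorial : ℝ) = ((k+n).choose n : ℝ) * n.factorial * k.factorial := by
      rw [← Nat.cast_mul, ← Nat.cast_mul]
      congr 1
      have h := Nat.choose_mul_factorial_mul_factorial (Nat.le_add_left n k)
      rw [Nat.add_sub_cancel] at h
      exact h.symm
    rw [hfac2]
    have h1 : (n.factorial : ℝ) ≠ 0 := Nat.cast_ne_zero.2 (Nat.factorial_ne_zero n)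
    have h2 : (k.factorial : ℝ) ≠ 0 := Nat.cast_ne_zero.2 (Nat.factorial_ne_zero k)
    field_simp
  have heq : (fun n => ∑ j ∈ range (k+1), g j n)
      = fun n => (-1:ℝ)^n * ((k+n).factorial : ℝ)
          / (((n.factorial : ℝ))^2 * (k.factorial : ℝ)) * x^n :=
    funext hpt
  rw [heq] at hsum
  convert hsum using 1
  rw [aux_genLaguerre_zero_eq, Finset.mul_sum]
  exact Finset.sum_congr rfl fun j _ => by ring

lemma aux_integrableOn_pow_gauss (p : ℕ) {b : ℝ} (hb : 0 < b) :
    IntegrableOn (fun t : ℝ => t ^ p * Real.exp (-b * t^2)) (Set.Ioi 0) := by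
  have h := integrableOn_rpow_mul_exp_neg_mul_sq hb (s := (p:ℝ))
    (lt_of_lt_of_le (by norm_num) (Nat.cast_nonneg p))
  refine h.congr_fun (fun t ht => ?_) measurableSet_Ioi
  beta_reduce
  rw [Real.rpow_natCast]

lemma aux_integrableOn_pow_gauss' (p : ℕ) {d : ℝ} (hd : 0 < d) :
    IntegrableOn (fun t : ℝ => t ^ p * Real.exp (-t^2/d)) (Set.Ioi 0) := by
  have h := aux_integrableOn_pow_gauss p (inv_pos.2 hd)
  refine h.congr_fun (fun t _ => ?_) measurableSet_Ioi
  beta_reduce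
  rw [show -d⁻¹ * t^2 = -t^2/d by field_simp]

lemma aux_gauss_moment (j : ℕ) {d : ℝ} (hd : 0 < d) :
    ∫ t in Set.Ioi (0:ℝ), t ^ (2*j+1) * Real.exp (-t^2/d)
      = (j.factorial : ℝ) * d ^ (j+1) / 2 := by
  have hb : (0:ℝ) < d⁻¹ := inv_pos.2 hd
  have key := integral_comp_rpow_Ioi (fun y => y ^ j * Real.exp (-(d⁻¹ * y))) (p := 2)
    (by norm_num)
  have hRHS : ∫ y in Set.Ioi (0:ℝ), y ^ j * Real.exp (-(d⁻¹ * y))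
      = (j.factorial : ℝ) * d ^ (j+1) := by
    have h := integral_rpow_mul_exp_neg_mul_Ioi (a := (j:ℝ)+1) (r := d⁻¹)
      (by positivity) hb
    rw [show ((j:ℝ)+1) - 1 = (j:ℝ) by ring] at h
    have hcong : ∫ t in Set.Ioi (0:ℝ), t ^ ((j:ℝ)) * Real.exp (-(d⁻¹ * t))
        = ∫ t in Set.Ioi (0:ℝ), t ^ j * Real.exp (-(d⁻¹ * t)) := by
      refine setIntegral_congr_fun measurableSet_Ioi (fun t _ => ?_)
      rw [Real.rpow_natCast]
    rw [hcong] at h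
    rw [h, one_div, inv_inv, Real.Gamma_nat_eq_factorial,
      show ((j:ℝ)+1) = ((j+1:ℕ):ℝ) by push_cast; ring, Real.rpow_natCast, mul_comm]
  have hLHS : ∫ x in Set.Ioi (0:ℝ), (|(2:ℝ)| * x ^ ((2:ℝ)-1)) •
        ((fun y => y ^ j * Real.exp (-(d⁻¹ * y))) (x ^ (2:ℝ)))
      = 2 * ∫ t in Set.Ioi (0:ℝ), t ^ (2*j+1) * Real.exp (-t^2/d) := by
    rw [← MeasureTheory.integral_const_mul]
    refine setIntegral_congr_fun measurableSet_Ioi (fun x hx => ?_)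
    have h2 : x ^ (2:ℝ) = x^2 := by
      rw [show (2:ℝ) = ((2:ℕ):ℝ) by norm_num, Real.rpow_natCast]
    have h1 : x ^ ((2:ℝ)-1) = x := by norm_num
    simp only [smul_eq_mul, h1, h2]
    rw [show -(d⁻¹ * x^2) = -x^2/d by ring, abs_two]
    ring
  rw [hLHS, hRHS] at key
  linarith

end Aux

theorem fourier_transform_generalized_gaussian (m : ℕ) (c : ℝ) (hc : 0 < c)
    (r : ℝ) (hr : 0 ≤ r) :
    (2 * π) * (∫ t in Set.Ioi (0 : ℝ),
        (1 / (Real.sqrt (2 * π) * c) * genLaguerre m (1 / 2) (t ^ 2 / (2 * c ^ 2))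
            * Real.exp (-t ^ 2 / (2 * c ^ 2))) * t * besselJ0 (r * t))
      = Real.sqrt (2 * π) * c *
          ∑ j ∈ Finset.range (m + 1),
            (-1 : ℝ) ^ j * rchoose ((m : ℝ) + 1 / 2) (m - j)
              * genLaguerre j 0 (c ^ 2 * r ^ 2 / 2) * Real.exp (-c ^ 2 * r ^ 2 / 2) := by
  have hπ : (0:ℝ) < 2 * π := by positivity
  set d : ℝ := 2 * c ^ 2 with hd_def
  have hd : (0:ℝ) < d := by positivity
  set x : ℝ := c ^ 2 * r ^ 2 / 2 with hx_def
  set P : ℝ := 1 / (Real.sqrt (2 * π) * c) with hP_def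
  set A : ℕ → ℝ := fun k => rchoose ((m : ℝ) + 1 / 2) (m - k) with hA_def
  set F : ℕ → ℝ → ℝ := fun n t =>
    (P * genLaguerre m (1 / 2) (t ^ 2 / d) * Real.exp (-t ^ 2 / d)) * t
      * ((-1:ℝ) ^ n / ((n.factorial : ℝ) ^ 2) * (r * t / 2) ^ (2 * n)) with hF_def
  set e : ℕ → ℕ → ℝ := fun k n =>
    P * ((-1:ℝ)^k * A k / ((k.factorial : ℝ) * d ^ k))
      * ((-1:ℝ)^n / ((n.factorial : ℝ) ^ 2) * (r / 2) ^ (2 * n)) with he_def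
  set Mk : ℕ → ℝ := fun j => (j.factorial : ℝ) * d ^ (j+1) / 2 with hMk_def
  have hy : (0:ℝ) ≤ (r/2)^2 * d := by positivity
  have hxy : ∀ n : ℕ, (r/2)^(2*n) * d^n = x^n := by
    intro n
    rw [pow_mul, ← mul_pow]
    congr 1
    rw [hx_def, hd_def]; ring
  -- F as finite sum
  have hF : ∀ n, F n = fun t => ∑ k ∈ Finset.range (m+1),
      e k n * (t ^ (2*(k+n)+1) * Real.exp (-t^2/d)) := by
    intro n
    funext t
    rw [hF_def]
    simp only [genLaguerre]
    rw [Finset.mul_sum, Finset.sum_mul, Finset.sum_mul, Finset.sum_mul]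
    refine Finset.sum_congr rfl fun k _ => ?_
    rw [he_def]
    rw [show rchoose ((m:ℝ) + 1/2) (m - k) = A k from rfl]
    have hdk : (d:ℝ)^k ≠ 0 := pow_ne_zero _ hd.ne'
    have hkf : ((k.factorial : ℝ)) ≠ 0 := Nat.cast_ne_zero.2 (Nat.factorial_ne_zero k)
    field_simp
    have hdd : d^k * d⁻¹^k = 1 := by rw [← mul_pow, mul_inv_cancel₀ hd.ne', one_pow]
    linear_combination (P * A k * t * t ^ (k * 2) * t ^ (n * 2) * r ^ (n * 2) * (1 / 2) ^ (n * 2)) * hdd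
  -- integrability
  have hFint : ∀ n, IntegrableOn (F n) (Set.Ioi 0) := by
    intro n
    rw [hF n]
    exact integrable_finset_sum _ fun k _ =>
      ((aux_integrableOn_pow_gauss' (2*(k+n)+1) hd).const_mul (e k n))
  -- value of each integral
  have hint : ∀ n, ∫ t in Set.Ioi (0:ℝ), F n t
      = ∑ k ∈ Finset.range (m+1), e k n * Mk (k+n) := by
    intro n
    simp only [hF n]
    rw [integral_finset_sum _ (fun k _ =>
      ((aux_integrableOn_pow_gauss' (2*(k+n)+1) hd).const_mul (e k n)))]
    refine Finset.sum_congr rfl fun k _ => ?_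
    rw [MeasureTheory.integral_const_mul, aux_gauss_moment (k+n) hd, hMk_def]
  -- bound on norm integrals
  have hnorm : ∀ n, (∫ t in Set.Ioi (0:ℝ), ‖F n t‖)
      ≤ ∑ k ∈ Finset.range (m+1), |e k n| * Mk (k+n) := by
    intro n
    have hgint : IntegrableOn (fun t : ℝ => ∑ k ∈ Finset.range (m+1),
        |e k n| * (t ^ (2*(k+n)+1) * Real.exp (-t^2/d))) (Set.Ioi 0) :=
      integrable_finset_sum _ fun k _ =>
        ((aux_integrableOn_pow_gauss' (2*(k+n)+1) hd).const_mul _)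
    have hle : ∫ t in Set.Ioi (0:ℝ), ‖F n t‖
        ≤ ∫ t in Set.Ioi (0:ℝ), ∑ k ∈ Finset.range (m+1),
            |e k n| * (t ^ (2*(k+n)+1) * Real.exp (-t^2/d)) := by
      refine setIntegral_mono_on (hFint n).norm hgint measurableSet_Ioi (fun t ht => ?_)
      rw [Real.norm_eq_abs, hF n]
      refine (Finset.abs_sum_le_sum_abs _ _).trans (le_of_eq ?_)
      refine Finset.sum_congr rfl fun k _ => ?_
      have ht' : (0:ℝ) < t := ht
      rw [abs_mul, abs_of_nonneg (by positivity : (0:ℝ) ≤ t ^ (2*(k+n)+1) * Real.exp (-t^2/d))]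
    refine hle.trans (le_of_eq ?_)
    rw [integral_finset_sum _ (fun k _ =>
      ((aux_integrableOn_pow_gauss' (2*(k+n)+1) hd).const_mul _))]
    refine Finset.sum_congr rfl fun k _ => ?_
    rw [MeasureTheory.integral_const_mul, aux_gauss_moment (k+n) hd, hMk_def]
  -- per-k summability and tsum value
  have hBsum : ∀ k, HasSum (fun n => e k n * Mk (k+n))
      ((P * (-1:ℝ)^k * A k * d / 2)
        * (Real.exp (-x) * genLaguerre k 0 x)) := by
    intro k
    have h := (aux_laguerre_exp_series k x).mul_left
      (P * (-1:ℝ)^k * A k * d / 2)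
    rw [show (fun n => e k n * Mk (k+n)) = (fun i => P * (-1:ℝ)^k * A k * d / 2
        * ((-1:ℝ)^i * ((k+i).factorial : ℝ) / (((i.factorial : ℝ))^2 * (k.factorial : ℝ)) * x^i))
        from funext fun n => ?_]
    · exact h
    rw [he_def, hMk_def]
    simp only []
    have hdk : (d:ℝ)^k ≠ 0 := pow_ne_zero _ hd.ne'
    have hkf : ((k.factorial : ℝ)) ≠ 0 := Nat.cast_ne_zero.2 (Nat.factorial_ne_zero k)
    have hnf : ((n.factorial : ℝ)) ≠ 0 := Nat.cast_ne_zero.2 (Nat.factorial_ne_zero n)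
    rw [← hxy n]
    rw [show d^(k+n+1) = d^k * d^n * d by rw [pow_add, pow_add, pow_one]]
    field_simp
  -- summability of the norm bound
  have hGsum : Summable (fun n => ∑ k ∈ Finset.range (m+1), |e k n| * Mk (k+n)) := by
    refine summable_sum fun k _ => ?_
    have h := (aux_summable_fact_ratio k hy).mul_left
      (|P * ((-1:ℝ)^k * A k / ((k.factorial : ℝ) * d ^ k))| * (d ^ (k+1) / 2))
    refine h.congr fun n => ?_
    have habs : |e k n| = |P * ((-1:ℝ)^k * A k / ((k.factorial : ℝ) * d ^ k))|
        * ((r/2)^(2*n) / ((n.factorial : ℝ))^2) := by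
      rw [he_def]
      simp only []
      rw [abs_mul]
      congr 1
      have h2 : (0:ℝ) ≤ r/2 := by positivity
      rw [abs_mul, abs_div]
      simp [abs_pow, abs_of_nonneg h2]
      ring
    rw [habs, hMk_def]
    simp only []
    rw [show ((r/2)^2 * d)^n = (r/2)^(2*n) * d^n by rw [mul_pow, pow_mul],
      show k+n+1 = (k+1)+n by omega, pow_add]
    ring
  -- interchange
  have hsumnorm : Summable (fun n => ∫ t in Set.Ioi (0:ℝ), ‖F n t‖) :=
    Summable.of_nonneg_of_le
      (fun n => integral_nonneg fun t => norm_nonneg _) hnorm hGsum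
  have hswap := MeasureTheory.integral_tsum_of_summable_integral_norm
    (μ := volume.restrict (Set.Ioi 0)) (F := F) (fun n => hFint n) hsumnorm
  -- identify the integrand with the tsum
  have hintegrand : (fun t : ℝ =>
      (1 / (Real.sqrt (2 * π) * c) * genLaguerre m (1 / 2) (t ^ 2 / d)
          * Real.exp (-t ^ 2 / d)) * t * besselJ0 (r * t))
      = fun t => ∑' n, F n t := by
    funext t
    rw [besselJ0, ← tsum_mul_left]
  rw [hintegrand, ← hswap]
  -- now sum over n then k
  have htsum : ∑' n, ∫ t in Set.Ioi (0:ℝ), F n t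
      = ∑ k ∈ Finset.range (m+1),
          (P * (-1:ℝ)^k * A k * d / 2)
            * (Real.exp (-x) * genLaguerre k 0 x) := by
    rw [show (fun n => ∫ t in Set.Ioi (0:ℝ), F n t)
        = fun n => ∑ k ∈ Finset.range (m+1), e k n * Mk (k+n) from funext hint]
    rw [Summable.tsum_finsetSum (fun k _ => (hBsum k).summable)]
    exact Finset.sum_congr rfl fun k _ => (hBsum k).tsum_eq
  rw [htsum, Finset.mul_sum, Finset.mul_sum]
  refine Finset.sum_congr rfl fun j _ => ?_
  have hs : Real.sqrt (2*π) ^ 2 = 2*π := Real.sq_sqrt (by positivity)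
  have hsne : Real.sqrt (2*π) ≠ 0 := by positivity
  rw [show Real.exp (-c ^ 2 * r ^ 2 / 2) = Real.exp (-x) by congr 1; rw [hx_def]; ring]
  have hss : Real.sqrt (2*π) * Real.sqrt (2*π) = 2 * π := Real.mul_self_sqrt hπ.le
  rw [hP_def, hd_def]
  generalize hsq : Real.sqrt (2*π) = s at hss ⊢
  have hsne : s ≠ 0 := by
    intro h
    rw [h, mul_zero] at hss
    linarith
  rw [show rchoose ((m:ℝ) + 1/2) (m - j) = A j from rfl]
  rw [← hss]
  field_simp
end
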